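/- For every n ≥ 2 there is a constant c_n > 0 with the following property: for every L > 0 and every nonnegative Lipschitz function f : S^{n−1} → ℝ with Lipschitz constant at most L (with respect to the Euclidean distance of ℝⁿ restricted to the sphere), if δ = sup_{u ∈ S^{n−1}} f(u) satisfies δ ≤ L, then ∫_{S^{n−1}} f dH^{n−1} ≥ c_n · δⁿ / L^{n−1}. (The spherical bump estimate underlying the proof of Lemma 3.1: a Lipschitz function attaining a maximum δ dominates the cone function u ↦ max{0, δ − L‖u − u*‖}.) -/

import Mathlib

/-!
Let `v` be a maximum point of `f` on the sphere, `δ = f v`. By the Lipschitz bound, `f ≥ δ / 2` on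
the cap `S ∩ closedBall v (δ / (2L))`. Writing the hemisphere around `v` as the graph
`w ↦ w + √(1 - ‖w‖²) v` over `v^⊥ ≅ ℝ^{n-1}`, this chart is `1`-antilipschitz and maps the ball of
radius `δ / (4L)` into the cap (here `δ ≤ L` keeps the radius below `1`), so the cap has
`H^{n-1}`-measure at least `(δ / 4L)^{n-1}` times that of the unit ball of `ℝ^{n-1}`. The same
charts, restricted to smaller balls where they are Lipschitz, cover the compact sphere, which
therefore has finite `H^{n-1}`-measure, so that `f` is integrable.
-/

open MeasureTheory Set Pointwise
open scoped RealInnerProductSpace ENNReal NNReal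

noncomputable section

/-- The support function `h(K,u) = sup_{x ∈ K} ⟨u,x⟩` of a set `K ⊆ ℝⁿ`. -/
def suppFn {n : ℕ} (K : Set (EuclideanSpace ℝ (Fin n))) (u : EuclideanSpace ℝ (Fin n)) : ℝ :=
  sSup ((fun x => ⟪u, x⟫) '' K)

/-- The line `g_{x,u} = {x + t u : t ∈ ℝ}` through `x` with direction `u`. -/
def lineThrough {n : ℕ} (x u : EuclideanSpace ℝ (Fin n)) : Set (EuclideanSpace ℝ (Fin n)) :=
  {y | ∃ t : ℝ, y = x + t • u}

/-- The orthogonal projection `A|u^⊥` of a set `A` onto the hyperplane through the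
origin orthogonal to the unit vector `u`. -/
def projPerp {n : ℕ} (u : EuclideanSpace ℝ (Fin n)) (A : Set (EuclideanSpace ℝ (Fin n))) :
    Set (EuclideanSpace ℝ (Fin n)) :=
  (fun x => x - ⟪x, u⟫ • u) '' A

/-- `B ⊆ ℝⁿ` is `(n-1)`-dimensional rectifiable: it is `H^{n-1}`-measurable, has finite
`H^{n-1}` measure, and `H^{n-1}`-almost all of it is covered by countably many Lipschitz
images of `ℝ^{n-1}`. -/
def IsRectifiableCodim1 (n : ℕ) (B : Set (EuclideanSpace ℝ (Fin n))) : Prop :=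
  NullMeasurableSet B μH[(n : ℝ) - 1] ∧ μH[(n : ℝ) - 1] B < ⊤ ∧
    ∃ f : ℕ → EuclideanSpace ℝ (Fin (n - 1)) → EuclideanSpace ℝ (Fin n),
      (∀ i, ∃ C : ℝ≥0, LipschitzWith C (f i)) ∧
        μH[(n : ℝ) - 1] (B \ ⋃ i, Set.range (f i)) = 0

/-- `ω_n = H^{n-1}(S^{n-1})`, the surface area of the unit sphere in `ℝⁿ`. -/
def sphereArea (n : ℕ) : ℝ :=
  (μH[(n : ℝ) - 1] (Metric.sphere (0 : EuclideanSpace ℝ (Fin n)) 1)).toReal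

/-- `κ_m`, the Lebesgue volume of the unit ball in `ℝ^m`. -/
def unitBallVol (m : ℕ) : ℝ :=
  (volume (Metric.closedBall (0 : EuclideanSpace ℝ (Fin m)) 1)).toReal

/-- The mean width `w(K) = (1/ω_n) ∫_{S^{n-1}} (h(K,u) + h(K,-u)) dH^{n-1}(u)`. -/
def meanWidth {n : ℕ} (K : Set (EuclideanSpace ℝ (Fin n))) : ℝ :=
  (sphereArea n)⁻¹ *
    ∫ u in Metric.sphere (0 : EuclideanSpace ℝ (Fin n)) 1,
      (suppFn K u + suppFn K (-u)) ∂μH[(n : ℝ) - 1]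

open Metric Module Topology

lemma sub_mul_measureReal_inter_closedBall_le_setIntegral {X : Type*} [PseudoMetricSpace X]
    [MeasurableSpace X] [OpensMeasurableSpace X] {μ : Measure X} {S : Set X} {f : X → ℝ}
    {L : ℝ≥0} (hS : MeasurableSet S) (hμS : μ S ≠ ∞) (hfi : IntegrableOn f S μ)
    (hf : LipschitzOnWith L f S) (hf0 : ∀ x ∈ S, 0 ≤ f x) {x₀ : X} (hx₀ : x₀ ∈ S) (r : ℝ) :
    (f x₀ - L * r) * μ.real (S ∩ closedBall x₀ r) ≤ ∫ x in S, f x ∂μ :=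
  calc (f x₀ - L * r) * μ.real (S ∩ closedBall x₀ r)
      ≤ ∫ x in S ∩ closedBall x₀ r, f x ∂μ := by
        refine setIntegral_ge_of_const_le_real (hS.inter measurableSet_closedBall)
          (measure_ne_top_of_subset inter_subset_left hμS) (fun x ⟨hx, hxr⟩ => ?_)
          (hfi.mono_set inter_subset_left)
        have h := (hf.dist_le_mul x hx x₀ hx₀).trans (mul_le_mul_of_nonneg_left hxr L.2)
        rw [Real.dist_eq] at h
        linarith [neg_abs_le (f x - f x₀)]
    _ ≤ ∫ x in S, f x ∂μ :=
        setIntegral_mono_set hfi (ae_restrict_of_forall_mem hS hf0) inter_subset_left.eventuallyLE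

section SphereChart

variable {E F : Type*} [NormedAddCommGroup E] [InnerProductSpace ℝ E]
  [NormedAddCommGroup F] [InnerProductSpace ℝ F] {v : E}

lemma norm_coe_add_smul_sq (hv : ‖v‖ = 1) (x : (ℝ ∙ v)ᗮ) (t : ℝ) :
    ‖(x : E) + t • v‖ ^ 2 = ‖x‖ ^ 2 + t ^ 2 := by
  have hx : ⟪(x : E), t • v⟫ = 0 := by
    rw [real_inner_smul_right, Submodule.mem_orthogonal_singleton_iff_inner_left.1 x.2, mul_zero]
  rw [sq, norm_add_sq_eq_norm_sq_add_norm_sq_real hx, norm_smul, hv, mul_one, Real.norm_eq_abs,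
    ← sq, ← sq, sq_abs, Submodule.coe_norm]

lemma abs_sqrt_one_sub_sq_sub_le {a b τ : ℝ} (ha : 0 ≤ a) (hb : 0 ≤ b) (hτ : 0 < τ)
    (haτ : τ ^ 2 ≤ 1 - a ^ 2) (hbτ : τ ^ 2 ≤ 1 - b ^ 2) :
    |√(1 - a ^ 2) - √(1 - b ^ 2)| ≤ τ⁻¹ * |a - b| := by
  set s := √(1 - a ^ 2)
  set t := √(1 - b ^ 2)
  have hs : τ ≤ s := Real.le_sqrt_of_sq_le haτ
  have ht : τ ≤ t := Real.le_sqrt_of_sq_le hbτ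
  have hs2 : s ^ 2 = 1 - a ^ 2 := Real.sq_sqrt (by nlinarith)
  have ht2 : t ^ 2 = 1 - b ^ 2 := Real.sq_sqrt (by nlinarith)
  have ha1 : a ≤ 1 := by nlinarith
  have hb1 : b ≤ 1 := by nlinarith
  have key : |s - t| * (s + t) = |a - b| * (a + b) := by
    calc |s - t| * (s + t) = |(s - t) * (s + t)| := by
          rw [abs_mul, abs_of_nonneg (by linarith : 0 ≤ s + t)]
      _ = |(b - a) * (a + b)| := by congr 1; linear_combination hs2 - ht2
      _ = |a - b| * (a + b) := by rw [abs_mul, abs_sub_comm, abs_of_nonneg (add_nonneg ha hb)]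
  -- `2τ |s - t| ≤ |s - t| (s + t) = |a - b| (a + b) ≤ 2 |a - b|`
  rw [le_inv_mul_iff₀ hτ]
  nlinarith [abs_nonneg (s - t), abs_nonneg (a - b)]

/-- The inverse of the orthogonal projection of the hemisphere `{u ∈ S | ⟪v, u⟫ ≥ 0}` onto
`v^⊥ ≃ F`. -/
def sphereChart (v : E) (T : F ≃ₗᵢ[ℝ] (ℝ ∙ v)ᗮ) (w : F) : E :=
  T w + √(1 - ‖w‖ ^ 2) • v

variable (T : F ≃ₗᵢ[ℝ] (ℝ ∙ v)ᗮ)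

lemma sphereChart_zero : sphereChart v T 0 = v := by
  simp [sphereChart]

lemma sphereChart_sub_sphereChart (w₁ w₂ : F) :
    sphereChart v T w₁ - sphereChart v T w₂ =
      (T (w₁ - w₂) : E) + (√(1 - ‖w₁‖ ^ 2) - √(1 - ‖w₂‖ ^ 2)) • v := by
  simp only [sphereChart, map_sub, Submodule.coe_sub, sub_smul]
  abel

lemma norm_sphereChart_sub_sq (hv : ‖v‖ = 1) (w₁ w₂ : F) :
    ‖sphereChart v T w₁ - sphereChart v T w₂‖ ^ 2 =
      ‖w₁ - w₂‖ ^ 2 + (√(1 - ‖w₁‖ ^ 2) - √(1 - ‖w₂‖ ^ 2)) ^ 2 := by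
  rw [sphereChart_sub_sphereChart, norm_coe_add_smul_sq hv, LinearIsometryEquiv.norm_map]

lemma norm_sphereChart (hv : ‖v‖ = 1) {w : F} (hw : ‖w‖ ≤ 1) : ‖sphereChart v T w‖ = 1 := by
  have h : ‖sphereChart v T w‖ ^ 2 = 1 := by
    rw [sphereChart, norm_coe_add_smul_sq hv, LinearIsometryEquiv.norm_map,
      Real.sq_sqrt (by nlinarith [norm_nonneg w])]
    ring
  nlinarith [norm_nonneg (sphereChart v T w)]

lemma antilipschitzWith_sphereChart (hv : ‖v‖ = 1) : AntilipschitzWith 1 (sphereChart v T) := by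
  refine AntilipschitzWith.of_le_mul_dist fun w₁ w₂ => ?_
  rw [NNReal.coe_one, one_mul, dist_eq_norm, dist_eq_norm]
  refine le_of_pow_le_pow_left₀ two_ne_zero (norm_nonneg _) ?_
  rw [norm_sphereChart_sub_sq T hv]
  exact le_add_of_nonneg_right (sq_nonneg _)

lemma norm_sphereChart_sub_le (hv : ‖v‖ = 1) {w : F} (hw : ‖w‖ ≤ 1) :
    ‖sphereChart v T w - v‖ ≤ 2 * ‖w‖ := by
  have h := norm_sphereChart_sub_sq T hv w 0
  norm_num [sphereChart_zero] at h
  have hs : √(1 - ‖w‖ ^ 2) ^ 2 = 1 - ‖w‖ ^ 2 := Real.sq_sqrt (by nlinarith [norm_nonneg w])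
  have hs0 := Real.sqrt_nonneg (1 - ‖w‖ ^ 2)
  refine le_of_pow_le_pow_left₀ two_ne_zero (by positivity) ?_
  nlinarith [norm_nonneg w]

lemma exists_lipschitzOnWith_sphereChart (hv : ‖v‖ = 1) {τ : ℝ} (hτ : 0 < τ) (hτ1 : τ ≤ 1) :
    ∃ K, LipschitzOnWith K (sphereChart v T) (closedBall 0 √(1 - τ ^ 2)) := by
  refine ⟨(1 + τ⁻¹).toNNReal, LipschitzOnWith.of_dist_le_mul fun w₁ hw₁ w₂ hw₂ => ?_⟩
  have hτw : ∀ w ∈ closedBall (0 : F) √(1 - τ ^ 2), τ ^ 2 ≤ 1 - ‖w‖ ^ 2 := fun w hw => by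
    rw [mem_closedBall_zero_iff] at hw
    have h1 : 0 ≤ 1 - τ ^ 2 := by nlinarith
    nlinarith [Real.sq_sqrt h1, norm_nonneg w]
  rw [dist_eq_norm, dist_eq_norm, Real.coe_toNNReal _ (by positivity), sphereChart_sub_sphereChart]
  calc ‖(T (w₁ - w₂) : E) + (√(1 - ‖w₁‖ ^ 2) - √(1 - ‖w₂‖ ^ 2)) • v‖
      ≤ ‖w₁ - w₂‖ + |√(1 - ‖w₁‖ ^ 2) - √(1 - ‖w₂‖ ^ 2)| := by
        refine (norm_add_le _ _).trans_eq ?_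
        rw [Submodule.norm_coe, T.norm_map, norm_smul, hv, mul_one, Real.norm_eq_abs]
    _ ≤ ‖w₁ - w₂‖ + τ⁻¹ * ‖w₁ - w₂‖ := by
        gcongr
        exact (abs_sqrt_one_sub_sq_sub_le (norm_nonneg _) (norm_nonneg _) hτ (hτw _ hw₁)
          (hτw _ hw₂)).trans (by gcongr; exact abs_norm_sub_norm_le _ _)
    _ = (1 + τ⁻¹) * ‖w₁ - w₂‖ := by ring

lemma mem_image_sphereChart (hv : ‖v‖ = 1) {u : E} (hu : ‖u‖ = 1) {τ : ℝ} (hτ : 0 ≤ τ)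
    (hτu : τ ≤ ⟪v, u⟫) : u ∈ sphereChart v T '' closedBall 0 √(1 - τ ^ 2) := by
  set t := ⟪v, u⟫
  have hx : u - t • v ∈ (ℝ ∙ v)ᗮ := by
    rw [Submodule.mem_orthogonal_singleton_iff_inner_right, inner_sub_right,
      real_inner_smul_right, real_inner_self_eq_norm_sq, hv]
    ring
  set x : (ℝ ∙ v)ᗮ := ⟨u - t • v, hx⟩
  have hxt : ‖x‖ ^ 2 = 1 - t ^ 2 := by
    have h := norm_coe_add_smul_sq hv x t
    rw [show (x : E) + t • v = u by simp [x], hu] at h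
    linarith
  refine ⟨T.symm x, ?_, ?_⟩
  · rw [mem_closedBall_zero_iff, LinearIsometryEquiv.norm_map, ← Real.sqrt_sq (norm_nonneg _)]
    exact Real.sqrt_le_sqrt (by nlinarith)
  · rw [sphereChart, LinearIsometryEquiv.apply_symm_apply, LinearIsometryEquiv.norm_map, hxt,
      sub_sub_cancel, Real.sqrt_sq (hτ.trans hτu)]
    simp [x]

end SphereChart

instance isAddHaarMeasure_hausdorffMeasure_euclideanSpace (d : ℕ) :
    (μH[d] : Measure (EuclideanSpace ℝ (Fin d))).IsAddHaarMeasure := by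
  simpa using isAddHaarMeasure_hausdorffMeasure (E := EuclideanSpace ℝ (Fin d))

section Sphere

variable {E : Type*} [NormedAddCommGroup E] [InnerProductSpace ℝ E] {d : ℕ}

lemma nonempty_linearIsometryEquiv_orthogonal (hE : finrank ℝ E = d + 1) {v : E} (hv : v ≠ 0) :
    Nonempty (EuclideanSpace ℝ (Fin d) ≃ₗᵢ[ℝ] (ℝ ∙ v)ᗮ) := by
  have : Fact (finrank ℝ E = d + 1) := ⟨hE⟩
  have : FiniteDimensional ℝ E := .of_fact_finrank_eq_succ d
  exact ⟨((stdOrthonormalBasis ℝ (ℝ ∙ v)ᗮ).reindex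
    (finCongr (Submodule.finrank_orthogonal_span_singleton hv))).repr.symm⟩

variable [FiniteDimensional ℝ E] [MeasurableSpace E] [BorelSpace E]

lemma hausdorffMeasure_sphere_lt_top (hE : finrank ℝ E = d + 1) :
    μH[d] (sphere (0 : E) 1) < ∞ := by
  refine (isCompact_sphere 0 1).measure_lt_top_of_nhdsWithin fun v hv => ?_
  rw [mem_sphere_zero_iff_norm] at hv
  obtain ⟨T⟩ :=
    nonempty_linearIsometryEquiv_orthogonal hE (norm_ne_zero_iff.1 (hv.trans_ne one_ne_zero))
  obtain ⟨K, hK⟩ := exists_lipschitzOnWith_sphereChart T hv one_half_pos one_half_lt_one.le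
  have hcap : {u : E | 1 / 2 < ⟪v, u⟫} ∈ 𝓝 v :=
    (isOpen_lt continuous_const (continuous_const.inner continuous_id')).mem_nhds
      (by norm_num [hv])
  refine ⟨sphere 0 1 ∩ {u | 1 / 2 < ⟪v, u⟫}, inter_mem_nhdsWithin _ hcap, ?_⟩
  calc μH[d] (sphere 0 1 ∩ {u | 1 / 2 < ⟪v, u⟫})
      ≤ μH[d] (sphereChart v T '' closedBall 0 √(1 - (1 / 2) ^ 2)) :=
        measure_mono fun u ⟨hu, hvu⟩ =>
          mem_image_sphereChart T hv (mem_sphere_zero_iff_norm.1 hu) one_half_pos.le hvu.le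
    _ ≤ K ^ (d : ℝ) * μH[d] (closedBall (0 : EuclideanSpace ℝ (Fin d)) √(1 - (1 / 2) ^ 2)) :=
        hK.hausdorffMeasure_image_le d.cast_nonneg
    _ < ∞ := ENNReal.mul_lt_top (by simp) measure_closedBall_lt_top

lemma le_hausdorffMeasureReal_sphere_inter_closedBall (hE : finrank ℝ E = d + 1) {v : E}
    (hv : v ∈ sphere (0 : E) 1) {r : ℝ} (hr0 : 0 ≤ r) (hr2 : r ≤ 2) :
    (r / 2) ^ d * μH[d].real (closedBall (0 : EuclideanSpace ℝ (Fin d)) 1) ≤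
      μH[d].real (sphere (0 : E) 1 ∩ closedBall v r) := by
  rw [mem_sphere_zero_iff_norm] at hv
  obtain ⟨T⟩ :=
    nonempty_linearIsometryEquiv_orthogonal hE (norm_ne_zero_iff.1 (hv.trans_ne one_ne_zero))
  have himage : sphereChart v T '' closedBall 0 (r / 2) ⊆ sphere 0 1 ∩ closedBall v r := by
    rintro _ ⟨w, hw, rfl⟩
    rw [mem_closedBall_zero_iff] at hw
    have hw1 : ‖w‖ ≤ 1 := by linarith
    refine ⟨mem_sphere_zero_iff_norm.2 (norm_sphereChart T hv hw1), ?_⟩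
    rw [mem_closedBall, dist_eq_norm]
    linarith [norm_sphereChart_sub_le T hv hw1]
  have hcap_finite : μH[d] (sphere (0 : E) 1 ∩ closedBall v r) < ∞ :=
    (measure_mono inter_subset_left).trans_lt (hausdorffMeasure_sphere_lt_top hE)
  calc (r / 2) ^ d * μH[d].real (closedBall (0 : EuclideanSpace ℝ (Fin d)) 1)
      = μH[d].real (closedBall (0 : EuclideanSpace ℝ (Fin d)) (r / 2)) := by
        rw [Measure.addHaar_real_closedBall' _ (0 : EuclideanSpace ℝ (Fin d))
          (by positivity : 0 ≤ r / 2), finrank_euclideanSpace_fin]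
    _ ≤ μH[d].real (sphereChart v T '' closedBall 0 (r / 2)) := by
        have h := (antilipschitzWith_sphereChart T hv).le_hausdorffMeasure_image d.cast_nonneg
          (closedBall 0 (r / 2))
        rw [ENNReal.coe_one, ENNReal.one_rpow, one_mul] at h
        exact ENNReal.toReal_mono (hcap_finite.trans_le' (measure_mono himage)).ne h
    _ ≤ μH[d].real (sphere (0 : E) 1 ∩ closedBall v r) := measureReal_mono himage hcap_finite.ne

theorem le_integral_sphere_of_lipschitz (hE : finrank ℝ E = d + 1) {L : ℝ} (hL : 0 < L)
    {f : E → ℝ} (hf0 : ∀ u, ‖u‖ = 1 → 0 ≤ f u)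
    (hf : ∀ u v, ‖u‖ = 1 → ‖v‖ = 1 → |f u - f v| ≤ L * ‖u - v‖)
    (hfL : (⨆ u : sphere (0 : E) 1, f u) ≤ L) :
    μH[d].real (closedBall (0 : EuclideanSpace ℝ (Fin d)) 1) / (2 * 4 ^ d) *
        (⨆ u : sphere (0 : E) 1, f u) ^ (d + 1) / L ^ d ≤
      ∫ u in sphere (0 : E) 1, f u ∂μH[d] := by
  have hlip : LipschitzOnWith L.toNNReal f (sphere 0 1) :=
    LipschitzOnWith.of_dist_le_mul fun u hu w hw => by
      rw [Real.dist_eq, dist_eq_norm, Real.coe_toNNReal _ hL.le]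
      exact hf u w (mem_sphere_zero_iff_norm.1 hu) (mem_sphere_zero_iff_norm.1 hw)
  have : Nontrivial E := Module.nontrivial_of_finrank_eq_succ hE
  obtain ⟨v, hv, hmax⟩ := (isCompact_sphere (0 : E) 1).exists_isMaxOn
    (NormedSpace.sphere_nonempty.2 zero_le_one) hlip.continuousOn
  have : Nonempty (sphere (0 : E) 1) := ⟨⟨v, hv⟩⟩
  have hsup : ⨆ u : sphere (0 : E) 1, f u = f v :=
    le_antisymm (ciSup_le fun u => hmax u.2)
      (le_ciSup ⟨f v, forall_mem_range.2 fun u : sphere (0 : E) 1 => hmax u.2⟩ ⟨v, hv⟩)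
  rw [hsup] at hfL ⊢
  have hfv : 0 ≤ f v := hf0 v (mem_sphere_zero_iff_norm.1 hv)
  have hμS := hausdorffMeasure_sphere_lt_top (d := d) hE
  have hbump := sub_mul_measureReal_inter_closedBall_le_setIntegral isClosed_sphere.measurableSet
    hμS.ne (hlip.continuousOn.integrableOn_of_subset_isCompact (isCompact_sphere 0 1)
      isClosed_sphere.measurableSet Subset.rfl hμS.ne) hlip
    (fun u hu => hf0 u (mem_sphere_zero_iff_norm.1 hu)) hv (f v / (2 * L))
  have hcap := le_hausdorffMeasureReal_sphere_inter_closedBall hE hv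
    (r := f v / (2 * L)) (by positivity) (by rw [div_le_iff₀ (by positivity)]; linarith)
  rw [Real.coe_toNNReal _ hL.le, show f v - L * (f v / (2 * L)) = f v / 2 by field_simp; ring]
    at hbump
  calc _ = f v / 2 * ((f v / (2 * L) / 2) ^ d *
          μH[d].real (closedBall (0 : EuclideanSpace ℝ (Fin d)) 1)) := by
        rw [show f v / (2 * L) / 2 = f v / (4 * L) by ring, div_pow, mul_pow, pow_succ]
        field_simp
    _ ≤ f v / 2 * μH[d].real (sphere (0 : E) 1 ∩ closedBall v (f v / (2 * L))) := by gcongr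
    _ ≤ _ := hbump

end Sphere

/-- The spherical bump estimate underlying Lemma 3.1: there is `c_n > 0` such that any
nonnegative `L`-Lipschitz function on `S^{n−1}` with supremum `δ ≤ L` satisfies
`∫_{S^{n−1}} f dH^{n−1} ≥ c_n·δⁿ/L^{n−1}`. -/
theorem stmt_13 {n : ℕ} (hn : 2 ≤ n) :
    ∃ c : ℝ, 0 < c ∧
      ∀ L : ℝ, 0 < L →
        ∀ f : EuclideanSpace ℝ (Fin n) → ℝ,
          (∀ u, ‖u‖ = 1 → 0 ≤ f u) →
          (∀ u v, ‖u‖ = 1 → ‖v‖ = 1 → |f u - f v| ≤ L * ‖u - v‖) →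
          (⨆ u : Metric.sphere (0 : EuclideanSpace ℝ (Fin n)) 1, f u) ≤ L →
          c * (⨆ u : Metric.sphere (0 : EuclideanSpace ℝ (Fin n)) 1, f u) ^ n
              / L ^ (n - 1) ≤
            ∫ u in Metric.sphere (0 : EuclideanSpace ℝ (Fin n)) 1,
              f u ∂μH[(n : ℝ) - 1] := by
  obtain ⟨d, rfl⟩ : ∃ d, n = d + 1 := ⟨n - 1, by omega⟩
  have hball : 0 < μH[d].real (closedBall (0 : EuclideanSpace ℝ (Fin d)) 1) :=
    ENNReal.toReal_pos (measure_closedBall_pos _ _ one_pos).ne' measure_closedBall_lt_top.ne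
  refine ⟨μH[d].real (closedBall (0 : EuclideanSpace ℝ (Fin d)) 1) / (2 * 4 ^ d), by positivity,
    fun L hL f hf0 hf hfL => ?_⟩
  rw [show ((d + 1 : ℕ) : ℝ) - 1 = d by push_cast; ring, Nat.add_sub_cancel]
  exact le_integral_sphere_of_lipschitz finrank_euclideanSpace_fin hL hf0 hf hfL
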